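/- Let X be a δ-hyperbolic space with Busemann function b based at ξ ∈ ∂∞X. For any η, ζ ∈ ∂∞X ∖ {ξ} and any Gromov sequences {x_i} ∈ η and {y_i} ∈ ζ: (η|ζ)_b ≤ liminf_i (x_i|y_i)_b ≤ limsup_i (x_i|y_i)_b ≤ (η|ζ)_b + 44δ. -/

import Mathlib

/-!
Up to `2δ` the Busemann function is `b(x) = |x - o| - 2 (x|ξ)_o`, hence
`(x|y)_b = (x|y)_o - (x|ξ)_o - (y|ξ)_o` up to `2δ`, where `(x|ξ)_o` is the liminf of
`(x|ξ_k)_o`. When `η ≠ ζ` are both different from `ξ`, these three products stay bounded along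
representatives, and δ-hyperbolicity shows that passing from one representative pair
`(x_i, y_i)` to another `(s_j, t_j)`, with `i, j` large, changes `(x|y)_o` by at most `2δ` and
each `(x|ξ)_o` by at most `δ`. Hence `(x_i|y_i)_b ≤ (s_j|t_j)_b + 8δ` for all large
`i, j`, which gives `limsup (x_i|y_i)_b ≤ (η|ζ)_b + 8δ`. When `η = ζ`, every `(x_i|y_i)_b`
tends to infinity.
-/

open Set Metric Filter

noncomputable section

/-- Gromov product (x|y)_o. -/
def gp {X : Type*} [MetricSpace X] (o x y : X) : ℝ :=
  (dist x o + dist y o - dist x y) / 2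

/-- `X` is Gromov δ-hyperbolic. -/
def IsGromovHyp (X : Type*) [MetricSpace X] (δ : ℝ) : Prop :=
  ∀ o x y z : X, min (gp o x z) (gp o z y) - δ ≤ gp o x y

/-- A Gromov sequence: (x_i | x_j)_o → ∞. -/
def IsGromovSeq {X : Type*} [MetricSpace X] (o : X) (s : ℕ → X) : Prop :=
  Tendsto (fun p : ℕ × ℕ => gp o (s p.1) (s p.2)) atTop atTop

/-- Equivalence of Gromov sequences: (x_i | y_i)_o → ∞. -/
def GromovEquiv {X : Type*} [MetricSpace X] (o : X) (s t : ℕ → X) : Prop :=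
  Tendsto (fun i => gp o (s i) (t i)) atTop atTop

/-- Gromov product (x|ξ)_p of a point and a boundary point (represented by the
Gromov sequence `ξ`), defined as the infimum over representatives of the class
of `ξ` of the liminf of Gromov products. -/
def gpPt {X : Type*} [MetricSpace X] (o p x : X) (ξ : ℕ → X) : ℝ :=
  sInf {r | ∃ s : ℕ → X, IsGromovSeq o s ∧ GromovEquiv o ξ s ∧
    r = liminf (fun i => gp p x (s i)) atTop}

/-- Gromov product (ξ|ζ)_p of two boundary points. -/
def gpPt2 {X : Type*} [MetricSpace X] (o p : X) (ξ ζ : ℕ → X) : ℝ :=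
  sInf {r | ∃ s t : ℕ → X, IsGromovSeq o s ∧ IsGromovSeq o t ∧
    GromovEquiv o ξ s ∧ GromovEquiv o ζ t ∧
    r = liminf (fun i => gp p (s i) (t i)) atTop}

/-- The Busemann function based at the boundary point `ξ`:
`b(x) = (o|ξ)_x − (x|ξ)_o`. -/
def bus {X : Type*} [MetricSpace X] (o : X) (ξ : ℕ → X) (x : X) : ℝ :=
  gpPt o x o ξ - gpPt o o x ξ

/-- The Gromov product based at the Busemann function `b` of `ξ`:
`(x|y)_b = (b(x)+b(y)−d(x,y))/2`. -/
def gpb {X : Type*} [MetricSpace X] (o : X) (ξ : ℕ → X) (x y : X) : ℝ :=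
  (bus o ξ x + bus o ξ y - dist x y) / 2

/-- The Gromov product based at `b` of two boundary points. -/
def gpbBdry {X : Type*} [MetricSpace X] (o : X) (ξ η ζ : ℕ → X) : ℝ :=
  sInf {r | ∃ s t : ℕ → X, IsGromovSeq o s ∧ IsGromovSeq o t ∧
    GromovEquiv o η s ∧ GromovEquiv o ζ t ∧
    r = liminf (fun i => gpb o ξ (s i) (t i)) atTop}

lemma tendsto_fst_atTop {α β : Type*} [Preorder α] [Preorder β] :
    Tendsto (Prod.fst : α × β → α) atTop atTop := by
  rw [← prod_atTop_atTop_eq]; exact tendsto_fst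

lemma tendsto_snd_atTop {α β : Type*} [Preorder α] [Preorder β] :
    Tendsto (Prod.snd : α × β → β) atTop atTop := by
  rw [← prod_atTop_atTop_eq]; exact tendsto_snd

lemma tendsto_swap_atTop {α β : Type*} [Preorder α] [Preorder β] :
    Tendsto (Prod.swap : α × β → β × α) atTop atTop := by
  rw [← prod_atTop_atTop_eq, ← prod_atTop_atTop_eq]; exact tendsto_prod_swap

lemma isBoundedUnder_of_eventually_le_add {f : ℕ → ℝ} {c : ℝ}
    (h : ∀ᶠ p : ℕ × ℕ in atTop, f p.1 ≤ f p.2 + c) :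
    IsBoundedUnder (· ≤ ·) atTop f ∧ IsBoundedUnder (· ≥ ·) atTop f := by
  obtain ⟨N, hN⟩ := eventually_atTop_prod_self'.1 h
  exact ⟨isBoundedUnder_of_eventually_le (a := f N + c)
      (eventually_atTop.2 ⟨N, fun i hi => hN i hi N le_rfl⟩),
    isBoundedUnder_of_eventually_ge (a := f N - c)
      (eventually_atTop.2 ⟨N, fun j hj => by linarith [hN N le_rfl j hj]⟩)⟩

lemma limsup_le_liminf_add_of_eventually {f g : ℕ → ℝ} {c : ℝ}
    (h : ∀ᶠ p : ℕ × ℕ in atTop, f p.1 ≤ g p.2 + c)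
    (hf : IsBoundedUnder (· ≥ ·) atTop f) (hg : IsBoundedUnder (· ≤ ·) atTop g) :
    limsup f atTop ≤ liminf g atTop + c := by
  refine limsup_le_of_le hf.isCoboundedUnder_le ?_
  filter_upwards [eventually_atTop_curry h] with i hi
  have : f i - c ≤ liminf g atTop :=
    le_liminf_of_le hg.isCoboundedUnder_ge (hi.mono fun j hj => by linarith)
  linarith

section GromovProduct

variable {X : Type*} [MetricSpace X] {δ : ℝ} {o x y z : X}

lemma gp_comm (o x y : X) : gp o x y = gp o y x := by
  unfold gp; rw [dist_comm x y]; ring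

lemma gp_nonneg (o x y : X) : 0 ≤ gp o x y := by
  unfold gp; linarith [dist_triangle x o y, dist_comm o y]

lemma gp_le_dist (o x y : X) : gp o x y ≤ dist x o := by
  unfold gp; linarith [dist_triangle y x o, dist_comm y x]

lemma gp_eq_dist_sub_gp (x o z : X) : gp x o z = dist x o - gp o x z := by
  unfold gp; rw [dist_comm o x, dist_comm z x, dist_comm o z]; ring

namespace IsGromovHyp

lemma le_or_le (hX : IsGromovHyp X δ) (o x y z : X) :
    gp o x z ≤ gp o x y + δ ∨ gp o z y ≤ gp o x y + δ :=
  min_le_iff.1 (by linarith [hX o x y z])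

lemma gp_le_of_lt (hX : IsGromovHyp X δ) (h : gp o x y + δ < gp o x z) :
    gp o z y ≤ gp o x y + δ :=
  (hX.le_or_le o x y z).resolve_left h.not_ge

lemma gp_le_of_le (hX : IsGromovHyp X δ) (h : gp o x z ≤ gp o z y) :
    gp o x z ≤ gp o x y + δ :=
  (hX.le_or_le o x y z).elim id h.trans

end IsGromovHyp

end GromovProduct

section Sequences

variable {X : Type*} [MetricSpace X] {δ : ℝ} {o : X} {a b c s t u v : ℕ → X}

def JointlyDiverge (o : X) (u v : ℕ → X) : Prop :=
  Tendsto (fun p : ℕ × ℕ => gp o (u p.1) (v p.2)) atTop atTop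

lemma JointlyDiverge.symm (h : JointlyDiverge o u v) : JointlyDiverge o v u :=
  (h.comp tendsto_swap_atTop).congr fun p => gp_comm o (u p.2) (v p.1)

lemma JointlyDiverge.gromovEquiv (h : JointlyDiverge o u v) : GromovEquiv o u v :=
  h.comp tendsto_atTop_diagonal

lemma GromovEquiv.symm (h : GromovEquiv o u v) : GromovEquiv o v u :=
  h.congr fun i => gp_comm o (u i) (v i)

lemma IsGromovSeq.gromovEquiv_self (hs : IsGromovSeq o s) : GromovEquiv o s s :=
  JointlyDiverge.gromovEquiv hs

lemma GromovEquiv.jointlyDiverge (hX : IsGromovHyp X δ) (huc : GromovEquiv o u c)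
    (hcv : JointlyDiverge o c v) : JointlyDiverge o u v := by
  refine tendsto_atTop.2 fun C => ?_
  filter_upwards [tendsto_fst_atTop.eventually (tendsto_atTop.1 huc (C + δ)),
    tendsto_atTop.1 hcv (C + δ)] with p h1 h2
  linarith [hX o (u p.1) (v p.2) (c p.1), le_min h1 h2]

lemma exists_eventually_gp_le_of_not_gromovEquiv (hX : IsGromovHyp X δ)
    (hab : ¬ GromovEquiv o a b) (hua : JointlyDiverge o u a) (hvb : JointlyDiverge o v b) :
    ∃ M, ∀ᶠ p : ℕ × ℕ in atTop, gp o (u p.1) (v p.2) ≤ M := by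
  obtain ⟨C, hC⟩ : ∃ C, ∃ᶠ m in atTop, gp o (a m) (b m) < C := by
    simpa only [GromovEquiv, Filter.tendsto_atTop, not_forall, not_eventually, not_le] using hab
  obtain ⟨N, hN⟩ := eventually_atTop_prod_self'.1
    ((tendsto_atTop.1 hua (C + δ + 1)).and (tendsto_atTop.1 hvb (C + 2 * δ + 1)))
  obtain ⟨m, hmN, hm⟩ := ((eventually_ge_atTop N).and_frequently hC).exists
  refine ⟨C + 2 * δ, eventually_atTop_prod_self'.2 ⟨N, fun i hi j hj => ?_⟩⟩
  have hu := (hN i hi m hmN).1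
  have hv := (hN j hj m hmN).2
  -- the small product `(a_m|b_m)` bounds first `(u_i|b_m)`, then `(u_i|v_j)`
  have hub : gp o (u i) (b m) ≤ gp o (a m) (b m) + δ :=
    hX.gp_le_of_lt (by linarith [gp_comm o (a m) (u i)])
  have huv : gp o (v j) (u i) ≤ gp o (b m) (u i) + δ :=
    hX.gp_le_of_lt (by linarith [gp_comm o (b m) (u i), gp_comm o (b m) (v j)])
  linarith [gp_comm o (u i) (v j), gp_comm o (b m) (u i)]

end Sequences

section BusemannEstimates

variable {X : Type*} [MetricSpace X] {δ : ℝ} {o x x' : X} {ξ s s' : ℕ → X}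

/-- `(x|ξ)_o` computed along the fixed representative `ξ`. -/
def gpLiminf (o x : X) (ξ : ℕ → X) : ℝ := liminf (fun k => gp o x (ξ k)) atTop

lemma isBoundedUnder_le_gp (o x : X) (s : ℕ → X) :
    IsBoundedUnder (· ≤ ·) atTop fun i => gp o x (s i) :=
  isBoundedUnder_of ⟨dist x o, fun i => gp_le_dist o x (s i)⟩

lemma isBoundedUnder_ge_gp (o x : X) (s : ℕ → X) :
    IsBoundedUnder (· ≥ ·) atTop fun i => gp o x (s i) :=
  isBoundedUnder_of ⟨0, fun i => gp_nonneg o x (s i)⟩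

lemma liminf_gp_le_liminf_gp_add {c : ℝ}
    (h : ∀ᶠ i in atTop, gp o x (s i) ≤ gp o x' (s' i) + c) :
    liminf (fun i => gp o x (s i)) atTop ≤ liminf (fun i => gp o x' (s' i)) atTop + c := by
  rw [← liminf_add_const atTop _ c (isBoundedUnder_le_gp o x' s').isCoboundedUnder_ge
    (isBoundedUnder_ge_gp o x' s')]
  exact liminf_le_liminf h (isBoundedUnder_ge_gp o x s)
    (isBoundedUnder_of (u := fun i => gp o x' (s' i) + c)
      ⟨dist x' o + c, fun i => by linarith [gp_le_dist o x' (s' i)]⟩).isCoboundedUnder_ge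

lemma IsGromovHyp.gp_le_gp_add_of_dist_le (hX : IsGromovHyp X δ) {y z : X}
    (h : dist x o ≤ gp o z y) : gp o x z ≤ gp o x y + δ :=
  hX.gp_le_of_le ((gp_le_dist o x z).trans h)

lemma GromovEquiv.liminf_gp_le_add (hX : IsGromovHyp X δ) (h : GromovEquiv o s s') (x : X) :
    liminf (fun i => gp o x (s i)) atTop ≤ liminf (fun i => gp o x (s' i)) atTop + δ :=
  liminf_gp_le_liminf_gp_add <| (tendsto_atTop.1 h (dist x o)).mono fun _ hi =>
    hX.gp_le_gp_add_of_dist_le hi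

lemma IsGromovSeq.limsup_gp_le_liminf_add (hX : IsGromovHyp X δ) (hs : IsGromovSeq o s)
    (x : X) :
    limsup (fun i => gp o x (s i)) atTop ≤ liminf (fun i => gp o x (s i)) atTop + δ := by
  refine limsup_le_of_le (isBoundedUnder_ge_gp o x s).isCoboundedUnder_le ?_
  filter_upwards [eventually_atTop_curry (tendsto_atTop.1 hs (dist x o))] with j hj
  simpa only [liminf_const] using liminf_gp_le_liminf_gp_add (s := fun _ => s j)
    (hj.mono fun _ hi => hX.gp_le_gp_add_of_dist_le hi)

lemma gpLiminf_le_gpLiminf_add (hX : IsGromovHyp X δ)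
    (h : ∀ᶠ k in atTop, gp o x' (ξ k) ≤ gp o x x') :
    gpLiminf o x' ξ ≤ gpLiminf o x ξ + δ :=
  liminf_gp_le_liminf_gp_add <| h.mono fun k hk => by
    have := hX.gp_le_of_le (o := o) (x := ξ k) (z := x') (y := x)
      (by rwa [gp_comm o (ξ k) x', gp_comm o x' x])
    rwa [gp_comm o (ξ k) x', gp_comm o (ξ k) x] at this

lemma gpPt_basepoint_bounds (hX : IsGromovHyp X δ) (hξ : IsGromovSeq o ξ) (x : X) :
    gpLiminf o x ξ - δ ≤ gpPt o o x ξ ∧ gpPt o o x ξ ≤ gpLiminf o x ξ := by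
  have hlb : ∀ r ∈ {r | ∃ s : ℕ → X, IsGromovSeq o s ∧ GromovEquiv o ξ s ∧
      r = liminf (fun i => gp o x (s i)) atTop}, gpLiminf o x ξ - δ ≤ r := by
    rintro r ⟨s, -, hξs, rfl⟩
    rw [gpLiminf]
    linarith [hξs.liminf_gp_le_add hX x]
  have hmem : gpLiminf o x ξ ∈ {r | ∃ s : ℕ → X, IsGromovSeq o s ∧ GromovEquiv o ξ s ∧
      r = liminf (fun i => gp o x (s i)) atTop} := ⟨ξ, hξ, hξ.gromovEquiv_self, rfl⟩
  exact ⟨le_csInf ⟨_, hmem⟩ hlb, csInf_le ⟨_, hlb⟩ hmem⟩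

lemma liminf_gp_eq_dist_sub_limsup (o x : X) (s : ℕ → X) :
    liminf (fun i => gp x o (s i)) atTop = dist x o - limsup (fun i => gp o x (s i)) atTop := by
  simp_rw [gp_eq_dist_sub_gp x o]
  exact liminf_const_sub atTop _ _ (isBoundedUnder_le_gp o x s)
    (isBoundedUnder_ge_gp o x s).isCoboundedUnder_le

lemma gpPt_point_bounds (hX : IsGromovHyp X δ) (hξ : IsGromovSeq o ξ) (x : X) :
    dist x o - gpLiminf o x ξ - 2 * δ ≤ gpPt o x o ξ ∧
      gpPt o x o ξ ≤ dist x o - gpLiminf o x ξ := by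
  have hlb : ∀ r ∈ {r | ∃ s : ℕ → X, IsGromovSeq o s ∧ GromovEquiv o ξ s ∧
      r = liminf (fun i => gp x o (s i)) atTop}, dist x o - gpLiminf o x ξ - 2 * δ ≤ r := by
    rintro r ⟨s, hs, hξs, rfl⟩
    rw [liminf_gp_eq_dist_sub_limsup, gpLiminf]
    linarith [hs.limsup_gp_le_liminf_add hX x, hξs.symm.liminf_gp_le_add hX x]
  have hmem : dist x o - limsup (fun i => gp o x (ξ i)) atTop ∈
      {r | ∃ s : ℕ → X, IsGromovSeq o s ∧ GromovEquiv o ξ s ∧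
      r = liminf (fun i => gp x o (s i)) atTop} :=
    ⟨ξ, hξ, hξ.gromovEquiv_self, (liminf_gp_eq_dist_sub_limsup o x ξ).symm⟩
  refine ⟨le_csInf ⟨_, hmem⟩ hlb, (csInf_le ⟨_, hlb⟩ hmem).trans ?_⟩
  rw [gpLiminf]
  linarith [liminf_le_limsup (isBoundedUnder_le_gp o x ξ) (isBoundedUnder_ge_gp o x ξ)]

lemma abs_bus_sub_le (hX : IsGromovHyp X δ) (hξ : IsGromovSeq o ξ) (x : X) :
    |bus o ξ x - (dist x o - 2 * gpLiminf o x ξ)| ≤ 2 * δ := by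
  obtain ⟨h1, h2⟩ := gpPt_basepoint_bounds hX hξ x
  obtain ⟨h3, h4⟩ := gpPt_point_bounds hX hξ x
  rw [abs_le, bus]
  constructor <;> linarith

lemma abs_gpb_sub_le (hX : IsGromovHyp X δ) (hξ : IsGromovSeq o ξ) (x y : X) :
    |gpb o ξ x y - (gp o x y - gpLiminf o x ξ - gpLiminf o y ξ)| ≤ 2 * δ := by
  have hx := abs_le.1 (abs_bus_sub_le hX hξ x)
  have hy := abs_le.1 (abs_bus_sub_le hX hξ y)
  rw [abs_le, gpb, gp]
  constructor <;> linarith [hx.1, hx.2, hy.1, hy.2]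

end BusemannEstimates

lemma liminf_eq_zero_of_tendsto_atTop {f : ℕ → ℝ} (h : Tendsto f atTop atTop) :
    liminf f atTop = 0 :=
  Real.liminf_of_not_isCoboundedUnder fun ⟨b, hb⟩ => by
    linarith [hb (b + 1) (tendsto_atTop.1 h _)]

lemma limsup_eq_zero_of_tendsto_atTop {f : ℕ → ℝ} (h : Tendsto f atTop atTop) :
    limsup f atTop = 0 :=
  Real.limsup_of_not_isBoundedUnder (not_isBoundedUnder_of_tendsto_atTop h)

section BoundaryEstimates

variable {X : Type*} [MetricSpace X] {δ : ℝ} {o : X} {ξ η ζ x y s t : ℕ → X}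

lemma exists_eventually_gpLiminf_le (hX : IsGromovHyp X δ) (hξ : IsGromovSeq o ξ)
    (hη : IsGromovSeq o η) (hηξ : ¬ GromovEquiv o η ξ) (hs : GromovEquiv o η s) :
    ∃ M, ∀ᶠ i in atTop, gpLiminf o (s i) ξ ≤ M := by
  obtain ⟨M, hM⟩ :=
    exists_eventually_gp_le_of_not_gromovEquiv hX hηξ (hs.symm.jointlyDiverge hX hη) hξ
  exact ⟨M, (eventually_atTop_curry hM).mono fun i hi =>
    liminf_le_of_frequently_le hi.frequently (isBoundedUnder_ge_gp o (s i) ξ)⟩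

lemma eventually_gpLiminf_le_gpLiminf_add (hX : IsGromovHyp X δ) (hξ : IsGromovSeq o ξ)
    (hη : IsGromovSeq o η) (hηξ : ¬ GromovEquiv o η ξ) (hx : GromovEquiv o η x)
    (hs : GromovEquiv o η s) :
    ∀ᶠ p : ℕ × ℕ in atTop, gpLiminf o (s p.2) ξ ≤ gpLiminf o (x p.1) ξ + δ := by
  have hsη : JointlyDiverge o s η := hs.symm.jointlyDiverge hX hη
  obtain ⟨M, hM⟩ := exists_eventually_gp_le_of_not_gromovEquiv hX hηξ hsη hξ
  have hxs : JointlyDiverge o x s := hx.symm.jointlyDiverge hX hsη.symm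
  filter_upwards [tendsto_snd_atTop.eventually (eventually_atTop_curry hM),
    tendsto_atTop.1 hxs M] with p hsξ hxs
  exact gpLiminf_le_gpLiminf_add hX (hsξ.mono fun _ hk => hk.trans hxs)

lemma eventually_gp_le_gp_add (hX : IsGromovHyp X δ) (hη : IsGromovSeq o η)
    (hζ : IsGromovSeq o ζ) (hηζ : ¬ GromovEquiv o η ζ)
    (hx : GromovEquiv o η x) (hy : GromovEquiv o ζ y)
    (hs : GromovEquiv o η s) (ht : GromovEquiv o ζ t) :
    ∀ᶠ p : ℕ × ℕ in atTop, gp o (x p.1) (y p.1) ≤ gp o (s p.2) (t p.2) + 2 * δ := by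
  have hxη := hx.symm.jointlyDiverge hX hη
  have hsη := hs.symm.jointlyDiverge hX hη
  have htζ := ht.symm.jointlyDiverge hX hζ
  obtain ⟨M₁, hM₁⟩ := exists_eventually_gp_le_of_not_gromovEquiv hX hηζ hxη htζ
  obtain ⟨M₂, hM₂⟩ := exists_eventually_gp_le_of_not_gromovEquiv hX hηζ hsη htζ
  have hyt : JointlyDiverge o y t := hy.symm.jointlyDiverge hX htζ.symm
  have hxs : JointlyDiverge o x s := hx.symm.jointlyDiverge hX hsη.symm
  filter_upwards [hM₁, tendsto_snd_atTop.eventually (tendsto_atTop_diagonal.eventually hM₂),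
    tendsto_atTop.1 hyt (M₁ + δ + 1), tendsto_atTop.1 hxs (M₂ + δ + 1)]
    with ⟨i, j⟩ hxt hst hyt hxs
  -- `(x_i|t_j)` and `(s_j|t_j)` are bounded while `(y_i|t_j)` and `(x_i|s_j)` are large
  have hxy : gp o (y i) (x i) ≤ gp o (t j) (x i) + δ :=
    hX.gp_le_of_lt (by linarith [gp_comm o (t j) (x i), gp_comm o (t j) (y i)])
  have hxt' : gp o (x i) (t j) ≤ gp o (s j) (t j) + δ :=
    hX.gp_le_of_lt (by linarith [gp_comm o (s j) (x i)])
  linarith [gp_comm o (y i) (x i), gp_comm o (t j) (x i)]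

lemma eventually_gpb_le_gpb_add (hX : IsGromovHyp X δ) (hξ : IsGromovSeq o ξ)
    (hη : IsGromovSeq o η) (hζ : IsGromovSeq o ζ) (hηξ : ¬ GromovEquiv o η ξ)
    (hζξ : ¬ GromovEquiv o ζ ξ) (hηζ : ¬ GromovEquiv o η ζ)
    (hx : GromovEquiv o η x) (hy : GromovEquiv o ζ y)
    (hs : GromovEquiv o η s) (ht : GromovEquiv o ζ t) :
    ∀ᶠ p : ℕ × ℕ in atTop,
      gpb o ξ (x p.1) (y p.1) ≤ gpb o ξ (s p.2) (t p.2) + 8 * δ := by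
  filter_upwards [eventually_gp_le_gp_add hX hη hζ hηζ hx hy hs ht,
    eventually_gpLiminf_le_gpLiminf_add hX hξ hη hηξ hx hs,
    eventually_gpLiminf_le_gpLiminf_add hX hξ hζ hζξ hy ht] with p hgp hsx hty
  linarith [(abs_le.1 (abs_gpb_sub_le hX hξ (x p.1) (y p.1))).2,
    (abs_le.1 (abs_gpb_sub_le hX hξ (s p.2) (t p.2))).1]

lemma isBoundedUnder_gpb (hX : IsGromovHyp X δ) (hξ : IsGromovSeq o ξ)
    (hη : IsGromovSeq o η) (hζ : IsGromovSeq o ζ) (hηξ : ¬ GromovEquiv o η ξ)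
    (hζξ : ¬ GromovEquiv o ζ ξ) (hηζ : ¬ GromovEquiv o η ζ)
    (hx : GromovEquiv o η x) (hy : GromovEquiv o ζ y) :
    IsBoundedUnder (· ≤ ·) atTop (fun i => gpb o ξ (x i) (y i)) ∧
      IsBoundedUnder (· ≥ ·) atTop (fun i => gpb o ξ (x i) (y i)) :=
  isBoundedUnder_of_eventually_le_add
    (eventually_gpb_le_gpb_add hX hξ hη hζ hηξ hζξ hηζ hx hy hx hy)

lemma limsup_gpb_le_liminf_gpb_add (hX : IsGromovHyp X δ) (hξ : IsGromovSeq o ξ)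
    (hη : IsGromovSeq o η) (hζ : IsGromovSeq o ζ) (hηξ : ¬ GromovEquiv o η ξ)
    (hζξ : ¬ GromovEquiv o ζ ξ) (hηζ : ¬ GromovEquiv o η ζ)
    (hx : GromovEquiv o η x) (hy : GromovEquiv o ζ y)
    (hs : GromovEquiv o η s) (ht : GromovEquiv o ζ t) :
    limsup (fun i => gpb o ξ (x i) (y i)) atTop ≤
      liminf (fun j => gpb o ξ (s j) (t j)) atTop + 8 * δ :=
  limsup_le_liminf_add_of_eventually
    (eventually_gpb_le_gpb_add hX hξ hη hζ hηξ hζξ hηζ hx hy hs ht)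
    (isBoundedUnder_gpb hX hξ hη hζ hηξ hζξ hηζ hx hy).2
    (isBoundedUnder_gpb hX hξ hη hζ hηξ hζξ hηζ hs ht).1

lemma tendsto_gpb_atTop (hX : IsGromovHyp X δ) (hξ : IsGromovSeq o ξ)
    (hη : IsGromovSeq o η) (hζ : IsGromovSeq o ζ) (hηξ : ¬ GromovEquiv o η ξ)
    (hζξ : ¬ GromovEquiv o ζ ξ) (hηζ : GromovEquiv o η ζ)
    (hs : GromovEquiv o η s) (ht : GromovEquiv o ζ t) :
    Tendsto (fun i => gpb o ξ (s i) (t i)) atTop atTop := by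
  obtain ⟨Ms, hMs⟩ := exists_eventually_gpLiminf_le hX hξ hη hηξ hs
  obtain ⟨Mt, hMt⟩ := exists_eventually_gpLiminf_le hX hξ hζ hζξ ht
  have hst : GromovEquiv o s t := (hs.symm.jointlyDiverge hX
    (hηζ.jointlyDiverge hX (ht.symm.jointlyDiverge hX hζ).symm)).gromovEquiv
  refine tendsto_atTop_mono' _ ?_ (tendsto_atTop_add_const_right _ (-(Ms + Mt + 2 * δ)) hst)
  filter_upwards [hMs, hMt] with i hsi hti
  linarith [(abs_le.1 (abs_gpb_sub_le hX hξ (s i) (t i))).1]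

lemma gpbBdry_le_liminf {a : ℝ}
    (ha : ∀ s t : ℕ → X, GromovEquiv o η s → GromovEquiv o ζ t →
      a ≤ liminf (fun i => gpb o ξ (s i) (t i)) atTop)
    (hs : IsGromovSeq o s) (ht : IsGromovSeq o t)
    (hηs : GromovEquiv o η s) (hζt : GromovEquiv o ζ t) :
    gpbBdry o ξ η ζ ≤ liminf (fun i => gpb o ξ (s i) (t i)) atTop :=
  csInf_le ⟨a, by rintro r ⟨s, t, -, -, hηs, hζt, rfl⟩; exact ha s t hηs hζt⟩
    ⟨s, t, hs, ht, hηs, hζt, rfl⟩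

lemma le_gpbBdry {a : ℝ}
    (ha : ∀ s t : ℕ → X, GromovEquiv o η s → GromovEquiv o ζ t →
      a ≤ liminf (fun i => gpb o ξ (s i) (t i)) atTop)
    (hs : IsGromovSeq o s) (ht : IsGromovSeq o t)
    (hηs : GromovEquiv o η s) (hζt : GromovEquiv o ζ t) :
    a ≤ gpbBdry o ξ η ζ :=
  le_csInf ⟨_, ⟨s, t, hs, ht, hηs, hζt, rfl⟩⟩ <| by
    rintro r ⟨s, t, -, -, hηs, hζt, rfl⟩; exact ha s t hηs hζt

end BoundaryEstimates

theorem stmt6 {X : Type*} [MetricSpace X] {δ : ℝ} (hδ : 0 ≤ δ) (hX : IsGromovHyp X δ)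
    (o : X) (ξ : ℕ → X) (hξ : IsGromovSeq o ξ)
    (η ζ : ℕ → X) (hη : IsGromovSeq o η) (hζ : IsGromovSeq o ζ)
    (hηξ : ¬ GromovEquiv o η ξ) (hζξ : ¬ GromovEquiv o ζ ξ)
    (xs ys : ℕ → X) (hxs : IsGromovSeq o xs) (hys : IsGromovSeq o ys)
    (hxsη : GromovEquiv o η xs) (hysζ : GromovEquiv o ζ ys) :
    gpbBdry o ξ η ζ ≤ liminf (fun i => gpb o ξ (xs i) (ys i)) atTop ∧
    liminf (fun i => gpb o ξ (xs i) (ys i)) atTop ≤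
      limsup (fun i => gpb o ξ (xs i) (ys i)) atTop ∧
    limsup (fun i => gpb o ξ (xs i) (ys i)) atTop ≤ gpbBdry o ξ η ζ + 44 * δ := by
  by_cases hηζ : GromovEquiv o η ζ
  · -- `(η|ζ)_b = ∞`, so every liminf, limsup and infimum here takes the junk value `0`
    have htendsto : ∀ s t, GromovEquiv o η s → GromovEquiv o ζ t →
        Tendsto (fun i => gpb o ξ (s i) (t i)) atTop atTop :=
      fun s t hs ht => tendsto_gpb_atTop hX hξ hη hζ hηξ hζξ hηζ hs ht
    have hzero : ∀ s t, GromovEquiv o η s → GromovEquiv o ζ t →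
        liminf (fun i => gpb o ξ (s i) (t i)) atTop = 0 :=
      fun s t hs ht => liminf_eq_zero_of_tendsto_atTop (htendsto s t hs ht)
    have hupper := gpbBdry_le_liminf (fun s t hs ht => (hzero s t hs ht).ge) hxs hys hxsη hysζ
    have hlower := le_gpbBdry (fun s t hs ht => (hzero s t hs ht).ge) hxs hys hxsη hysζ
    rw [hzero xs ys hxsη hysζ] at hupper ⊢
    rw [limsup_eq_zero_of_tendsto_atTop (htendsto xs ys hxsη hysζ)]
    exact ⟨hupper, le_rfl, by linarith⟩
  · have hcomp : ∀ s t, GromovEquiv o η s → GromovEquiv o ζ t →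
        limsup (fun i => gpb o ξ (xs i) (ys i)) atTop - 8 * δ ≤
          liminf (fun i => gpb o ξ (s i) (t i)) atTop := fun s t hs ht => by
      linarith [limsup_gpb_le_liminf_gpb_add hX hξ hη hζ hηξ hζξ hηζ hxsη hysζ hs ht]
    obtain ⟨hbddAbove, hbddBelow⟩ :=
      isBoundedUnder_gpb hX hξ hη hζ hηξ hζξ hηζ hxsη hysζ
    have hlower := le_gpbBdry hcomp hxs hys hxsη hysζ
    exact ⟨gpbBdry_le_liminf hcomp hxs hys hxsη hysζ, liminf_le_limsup hbddAbove hbddBelow,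
      by linarith⟩
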